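/- In the braid group B_{2n+2}, for n ≥ 1, the element (σ_{2n}^{-1}σ_{2n-1}^{-1}⋯σ_1^{-1})^{2n+1}(σ_1σ_2⋯σ_{2n+1})^{2n} equals (σ_{2n}^{-1}σ_{2n-1}^{-1}⋯σ_1^{-1}) σ_{2n+1}σ_{2n}⋯σ_2. -/

import Mathlib

/-- Braid relations on `k` generators (so this presents the braid group `B_{k+1}`).
Generator `i : Fin k` corresponds to the Artin generator `σ_{i+1}`. -/
def braidRels (k : ℕ) : Set (FreeGroup (Fin k)) :=
  {w | ∃ i j : Fin k, (i : ℕ) + 2 ≤ (j : ℕ) ∧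
      w = FreeGroup.of i * FreeGroup.of j * (FreeGroup.of i)⁻¹ * (FreeGroup.of j)⁻¹} ∪
  {w | ∃ i j : Fin k, (i : ℕ) + 1 = (j : ℕ) ∧
      w = FreeGroup.of i * FreeGroup.of j * FreeGroup.of i *
        (FreeGroup.of j * FreeGroup.of i * FreeGroup.of j)⁻¹}

/-- The braid group on `k + 1` strands, presented with `k` Artin generators. -/
abbrev BraidGroup (k : ℕ) : Type := PresentedGroup (braidRels k)

/-- The Artin generator `σ_i` (for `1 ≤ i ≤ k`) of the braid group on `k+1` strands. -/
def braidGen (k i : ℕ) : BraidGroup k :=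
  if h : 1 ≤ i ∧ i ≤ k then PresentedGroup.of (⟨i - 1, by omega⟩ : Fin k) else 1

lemma rel_eq_one {k : ℕ} {r : FreeGroup (Fin k)} (h : r ∈ braidRels k) :
    PresentedGroup.mk (braidRels k) r = 1 := by
  have : r ∈ Subgroup.normalClosure (braidRels k) := Subgroup.subset_normalClosure h
  exact (QuotientGroup.eq_one_iff r).mpr this

lemma braid_comm {k : ℕ} {i j : ℕ} (hij : i + 2 ≤ j) :
    Commute (braidGen k i) (braidGen k j) := by
  unfold braidGen
  by_cases hi : 1 ≤ i ∧ i ≤ k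
  · by_cases hj : 1 ≤ j ∧ j ≤ k
    · rw [dif_pos hi, dif_pos hj]
      have hr : (FreeGroup.of (⟨i-1, by omega⟩ : Fin k) * FreeGroup.of (⟨j-1, by omega⟩ : Fin k) *
          (FreeGroup.of (⟨i-1, by omega⟩ : Fin k))⁻¹ * (FreeGroup.of (⟨j-1, by omega⟩ : Fin k))⁻¹)
          ∈ braidRels k := by
        left
        exact ⟨⟨i-1, by omega⟩, ⟨j-1, by omega⟩, by simp; omega, rfl⟩
      have := rel_eq_one hr
      simp only [map_mul, map_inv] at this
      rw [mul_inv_eq_one, mul_inv_eq_iff_eq_mul] at this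
      exact this
    · simp only [dif_neg hj]; exact Commute.one_right _
  · simp only [dif_neg hi]; exact Commute.one_left _

lemma braid_braid {k : ℕ} {i : ℕ} (h1 : 1 ≤ i) (h2 : i + 1 ≤ k) :
    braidGen k i * braidGen k (i+1) * braidGen k i =
      braidGen k (i+1) * braidGen k i * braidGen k (i+1) := by
  unfold braidGen
  rw [dif_pos ⟨h1, by omega⟩, dif_pos ⟨by omega, h2⟩]
  have hr : (FreeGroup.of (⟨i-1, by omega⟩ : Fin k) * FreeGroup.of (⟨i+1-1, by omega⟩ : Fin k) *
      FreeGroup.of (⟨i-1, by omega⟩ : Fin k) *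
      (FreeGroup.of (⟨i+1-1, by omega⟩ : Fin k) * FreeGroup.of (⟨i-1, by omega⟩ : Fin k) *
        FreeGroup.of (⟨i+1-1, by omega⟩ : Fin k))⁻¹) ∈ braidRels k := by
    right
    exact ⟨⟨i-1, by omega⟩, ⟨i+1-1, by omega⟩, by simp; omega, rfl⟩
  have := rel_eq_one hr
  simp only [map_mul, map_inv] at this
  rw [mul_inv_eq_one] at this
  exact this


/-- The ascending word `σ_a σ_{a+1} ⋯ σ_b`. -/
def asc (k a b : ℕ) : BraidGroup k :=
  ((List.range' a (b + 1 - a)).map (braidGen k)).prod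

/-- The descending word `σ_b σ_{b-1} ⋯ σ_a`. -/
def descP (k a b : ℕ) : BraidGroup k :=
  (((List.range' a (b + 1 - a)).map (braidGen k)).reverse).prod

/-- The descending word of inverses `σ_b⁻¹ σ_{b-1}⁻¹ ⋯ σ_a⁻¹`. -/
def descInv (k a b : ℕ) : BraidGroup k :=
  (((List.range' a (b + 1 - a)).map (fun i => (braidGen k i)⁻¹)).reverse).prod

lemma asc_empty {k a b : ℕ} (h : b < a) : asc k a b = 1 := by
  unfold asc
  have : b + 1 - a = 0 := by omega
  simp [this]

lemma descP_empty {k a b : ℕ} (h : b < a) : descP k a b = 1 := by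
  unfold descP
  have : b + 1 - a = 0 := by omega
  simp [this]

lemma asc_concat {k a b : ℕ} (h : a ≤ b + 1) :
    asc k a (b + 1) = asc k a b * braidGen k (b + 1) := by
  unfold asc
  have h1 : b + 1 + 1 - a = (b + 1 - a) + 1 := by omega
  rw [h1, List.range'_concat]
  have h2 : a + 1 * (b + 1 - a) = b + 1 := by omega
  rw [h2]
  simp

lemma descP_concat {k a b : ℕ} (h : a ≤ b + 1) :
    descP k a (b + 1) = braidGen k (b + 1) * descP k a b := by
  unfold descP
  have h1 : b + 1 + 1 - a = (b + 1 - a) + 1 := by omega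
  rw [h1, List.range'_concat]
  have h2 : a + 1 * (b + 1 - a) = b + 1 := by omega
  rw [h2]
  simp

lemma asc_single {k a : ℕ} : asc k a a = braidGen k a := by
  unfold asc
  simp

lemma descP_single {k a : ℕ} : descP k a a = braidGen k a := by
  unfold descP
  simp

lemma descInv_eq {k a b : ℕ} : descInv k a b = (asc k a b)⁻¹ := by
  unfold descInv asc
  rw [List.prod_inv_reverse]
  congr 1
  rw [List.map_map]
  rfl

lemma asc_split {k a b c : ℕ} (h1 : a ≤ b + 1) (h2 : b ≤ c) :
    asc k a b * asc k (b + 1) c = asc k a c := by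
  unfold asc
  rw [← List.prod_append, ← List.map_append]
  congr 2
  have h4 : a + (b + 1 - a) = b + 1 := by omega
  have h5 := List.range'_append_1 (s := a) (m := b + 1 - a) (n := c + 1 - (b + 1))
  rw [h4] at h5
  rw [h5]
  congr 1
  omega

lemma commute_asc {k j a b : ℕ} (h : ∀ i, a ≤ i → i ≤ b → Commute (braidGen k j) (braidGen k i)) :
    Commute (braidGen k j) (asc k a b) := by
  unfold asc
  apply Commute.list_prod_right
  intro x hx
  simp only [List.mem_map, List.mem_range'_1] at hx
  obtain ⟨i, ⟨hi1, hi2⟩, rfl⟩ := hx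
  exact h i hi1 (by omega)

lemma commute_descP {k j a b : ℕ} (h : ∀ i, a ≤ i → i ≤ b → Commute (braidGen k j) (braidGen k i)) :
    Commute (braidGen k j) (descP k a b) := by
  unfold descP
  apply Commute.list_prod_right
  intro x hx
  simp only [List.mem_reverse, List.mem_map, List.mem_range'_1] at hx
  obtain ⟨i, ⟨hi1, hi2⟩, rfl⟩ := hx
  exact h i hi1 (by omega)

lemma commute_asc_high {k j a b : ℕ} (h : b + 2 ≤ j) : Commute (braidGen k j) (asc k a b) :=
  commute_asc fun i _ hi2 => (braid_comm (by omega)).symm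

lemma commute_asc_low {k j a b : ℕ} (h : j + 2 ≤ a) : Commute (braidGen k j) (asc k a b) :=
  commute_asc fun i hi1 _ => braid_comm (by omega)

lemma commute_descP_high {k j a b : ℕ} (h : b + 2 ≤ j) : Commute (braidGen k j) (descP k a b) :=
  commute_descP fun i _ hi2 => (braid_comm (by omega)).symm

lemma comm_rw {G : Type*} [Group G] {a b : G} (h : Commute a b) (x : G) :
    a * (b * x) = b * (a * x) := by
  rw [← mul_assoc, h.eq, mul_assoc]

lemma mul_mul_eq {G : Type*} [Group G] {a b c d : G} (h : a * b = c * d) (x : G) :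
    a * (b * x) = c * (d * x) := by
  rw [← mul_assoc, h, mul_assoc]

lemma braid_rw {k i : ℕ} (h1 : 1 ≤ i) (h2 : i + 1 ≤ k) (x : BraidGroup k) :
    braidGen k i * (braidGen k (i+1) * (braidGen k i * x)) =
      braidGen k (i+1) * (braidGen k i * (braidGen k (i+1) * x)) := by
  simp only [← mul_assoc]
  rw [braid_braid h1 h2]

lemma asc_concat' {k a b : ℕ} (h : a ≤ b) (h2 : 1 ≤ b) :
    asc k a b = asc k a (b-1) * braidGen k b := by
  obtain ⟨c, rfl⟩ : ∃ c, b = c + 1 := ⟨b - 1, by omega⟩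
  simpa using asc_concat (by omega)

lemma descP_concat' {k a b : ℕ} (h : a ≤ b) (h2 : 1 ≤ b) :
    descP k a b = braidGen k b * descP k a (b-1) := by
  obtain ⟨c, rfl⟩ : ∃ c, b = c + 1 := ⟨b - 1, by omega⟩
  simpa using descP_concat (by omega)

lemma shift {k j c : ℕ} (h1 : 2 ≤ j) (h2 : j ≤ c) (h3 : c ≤ k) :
    braidGen k j * asc k 1 c = asc k 1 c * braidGen k (j - 1) := by
  obtain ⟨m, rfl⟩ : ∃ m, j = m + 2 := ⟨j - 2, by omega⟩
  have hm1 : m + 2 - 1 = m + 1 := by omega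
  rw [hm1]
  have e1 : asc k (m+1) (m+2) = braidGen k (m+1) * braidGen k (m+2) := by
    rw [← asc_split (a := m+1) (b := m+1) (c := m+2) (by omega) (by omega),
      asc_single, asc_single]
  have e2 : asc k 1 c = asc k 1 m * (braidGen k (m+1) * (braidGen k (m+2) * asc k (m+3) c)) := by
    rw [← asc_split (a := 1) (b := m) (c := c) (by omega) (by omega),
      ← asc_split (a := m+1) (b := m+2) (c := c) (by omega) (by omega), e1]
    simp only [mul_assoc]
  rw [e2]
  rw [comm_rw (commute_asc_high (j := m+2) (a := 1) (b := m) (by omega))]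
  rw [← braid_rw (i := m+1) (by omega) (by omega)]
  rw [(commute_asc_low (j := m+1) (a := m+3) (b := c) (by omega)).eq]
  simp only [mul_assoc]

lemma descP_shift {k c : ℕ} (h3 : c ≤ k) :
    ∀ b a, 2 ≤ a → b ≤ c → descP k a b * asc k 1 c = asc k 1 c * descP k (a-1) (b-1) := by
  intro b
  induction b with
  | zero =>
    intro a ha _
    rw [descP_empty (by omega), descP_empty (by omega), one_mul, mul_one]
  | succ b' ih =>
    intro a ha hbc
    by_cases hab : b' + 1 < a
    · rw [descP_empty hab, descP_empty (by omega), one_mul, mul_one]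
    · push_neg at hab
      have h1 : descP k a (b'+1) = braidGen k (b'+1) * descP k a b' := descP_concat (by omega)
      have h2 : descP k a b' * asc k 1 c = asc k 1 c * descP k (a-1) (b'-1) :=
        ih a ha (by omega)
      have h3' : braidGen k (b'+1) * asc k 1 c = asc k 1 c * braidGen k b' := by
        have := shift (j := b'+1) (c := c) (by omega) (by omega) h3
        simpa using this
      have h4 : descP k (a-1) ((b'+1)-1) = braidGen k b' * descP k (a-1) (b'-1) := by
        simp only [Nat.add_sub_cancel]
        exact descP_concat' (by omega) (by omega)
      rw [h1, h4]
      calc braidGen k (b'+1) * descP k a b' * asc k 1 c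
          = braidGen k (b'+1) * (descP k a b' * asc k 1 c) := by rw [mul_assoc]
        _ = braidGen k (b'+1) * (asc k 1 c * descP k (a-1) (b'-1)) := by rw [h2]
        _ = (braidGen k (b'+1) * asc k 1 c) * descP k (a-1) (b'-1) := by rw [mul_assoc]
        _ = (asc k 1 c * braidGen k b') * descP k (a-1) (b'-1) := by rw [h3']
        _ = asc k 1 c * (braidGen k b' * descP k (a-1) (b'-1)) := by rw [mul_assoc]

lemma main_pow {k : ℕ} (hk : 3 ≤ k) (p : ℕ) (hp1 : 1 ≤ p) (hp2 : p ≤ k - 1) :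
    (asc k 1 k) ^ p = (asc k 1 (k-1)) ^ p * descP k (k+1-p) k := by
  revert hp1 hp2
  induction p with
  | zero => intro h _; omega
  | succ q ih =>
    intro _ hp2
    by_cases hq : q = 0
    · subst hq
      have e0 : k + 1 - (0+1) = k := by omega
      rw [e0, pow_one, pow_one]
      rw [asc_concat' (by omega) (by omega)]
      congr 1
      rw [descP_concat' (le_refl k) (by omega), descP_empty (by omega), mul_one]
    · have hq1 : 1 ≤ q := by omega
      have IH := ih hq1 (by omega)
      obtain ⟨r, rfl⟩ : ∃ r, k = q + 2 + r := ⟨k - q - 2, by omega⟩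
      have e1 : q + 2 + r - 1 = q + r + 1 := by omega
      have e3 : q + 2 + r + 1 - (q + 1) = r + 2 := by omega
      have e4 : q + 2 + r + 1 - q = r + 3 := by omega
      rw [e4, e1] at IH
      rw [e3, e1]
      have hσ : braidGen (q+2+r) (q+2+r) = braidGen (q+2+r) (q+r+1+1) :=
        congrArg _ (by omega)
      have h0 : asc (q+2+r) 1 (q+2+r)
          = asc (q+2+r) 1 (q+r+1) * braidGen (q+2+r) (q+r+1+1) := by
        rw [asc_concat' (by omega) (by omega), e1, hσ]
      have h1 : descP (q+2+r) (r+3) (q+2+r)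
          = braidGen (q+2+r) (q+r+1+1) * descP (q+2+r) (r+3) (q+r+1) := by
        rw [descP_concat' (by omega) (by omega), e1, hσ]
      have h2 : descP (q+2+r) (r+3) (q+r+1) * asc (q+2+r) 1 (q+r+1)
          = asc (q+2+r) 1 (q+r+1) * descP (q+2+r) (r+2) (q+r) := by
        have h := descP_shift (k := q+2+r) (c := q+r+1) (by omega) (q+r+1) (r+3)
          (by omega) le_rfl
        rw [show r+3-1 = r+2 from by omega, show q+r+1-1 = q+r from by omega] at h
        exact h
      have h3 : braidGen (q+2+r) (q+r+1+1) * asc (q+2+r) 1 (q+r+1)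
          = asc (q+2+r) 1 (q+r) * (braidGen (q+2+r) (q+r+1+1) * braidGen (q+2+r) (q+r+1)) := by
        rw [asc_concat' (a := 1) (b := q+r+1) (by omega) (by omega),
          show q+r+1-1 = q+r from by omega]
        simp only [← mul_assoc]
        congr 1
        exact (commute_asc_high (j := q+r+1+1) (a := 1) (b := q+r) (by omega)).eq
      have h4 : Commute (braidGen (q+2+r) (q+r+1+1)) (descP (q+2+r) (r+2) (q+r)) :=
        commute_descP_high (by omega)
      have h7 : braidGen (q+2+r) (q+r+1) * descP (q+2+r) (r+2) (q+r)
          = descP (q+2+r) (r+2) (q+r+1) := (descP_concat (by omega)).symm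
      have h8 : braidGen (q+2+r) (q+r+1+1) * descP (q+2+r) (r+2) (q+r+1)
          = descP (q+2+r) (r+2) (q+2+r) := by
        rw [descP_concat' (a := r+2) (b := q+2+r) (by omega) (by omega), e1, hσ]
      have h6 : asc (q+2+r) 1 (q+r) * braidGen (q+2+r) (q+r+1) = asc (q+2+r) 1 (q+r+1) := by
        rw [asc_concat' (a := 1) (b := q+r+1) (by omega) (by omega),
          show q+r+1-1 = q+r from by omega]
      have key : braidGen (q+2+r) (q+r+1+1) * (descP (q+2+r) (r+3) (q+r+1) *
            (asc (q+2+r) 1 (q+r+1) * braidGen (q+2+r) (q+r+1+1)))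
          = asc (q+2+r) 1 (q+r+1) * descP (q+2+r) (r+2) (q+2+r) := by
        rw [mul_mul_eq h2, mul_mul_eq h3]
        simp only [mul_assoc]
        rw [← h4.eq]
        rw [← braid_rw (i := q+r+1) (by omega) (by omega)]
        rw [h7, h8]
        simp only [← mul_assoc]
        rw [h6]
      calc asc (q+2+r) 1 (q+2+r) ^ (q+1)
          = asc (q+2+r) 1 (q+2+r) ^ q * asc (q+2+r) 1 (q+2+r) := pow_succ _ _
        _ = (asc (q+2+r) 1 (q+r+1) ^ q * descP (q+2+r) (r+3) (q+2+r)) *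
            (asc (q+2+r) 1 (q+r+1) * braidGen (q+2+r) (q+r+1+1)) := by rw [IH, h0]
        _ = asc (q+2+r) 1 (q+r+1) ^ q * (braidGen (q+2+r) (q+r+1+1) *
            (descP (q+2+r) (r+3) (q+r+1) *
              (asc (q+2+r) 1 (q+r+1) * braidGen (q+2+r) (q+r+1+1)))) := by
            rw [h1]; simp only [mul_assoc]
        _ = asc (q+2+r) 1 (q+r+1) ^ q *
            (asc (q+2+r) 1 (q+r+1) * descP (q+2+r) (r+2) (q+2+r)) := by rw [key]
        _ = asc (q+2+r) 1 (q+r+1) ^ (q+1) * descP (q+2+r) (r+2) (q+2+r) := by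
            rw [pow_succ]; simp only [mul_assoc]


/-- In `B_{2n+2}`, for `n ≥ 1`:
`(σ_{2n}⁻¹⋯σ_1⁻¹)^{2n+1} (σ_1⋯σ_{2n+1})^{2n} = (σ_{2n}⁻¹⋯σ_1⁻¹) σ_{2n+1}σ_{2n}⋯σ_2`. -/
theorem braid_full_reduction (n : ℕ) (hn : 1 ≤ n) :
    (descInv (2*n+1) 1 (2*n)) ^ (2*n+1) * (asc (2*n+1) 1 (2*n+1)) ^ (2*n) =
      descInv (2*n+1) 1 (2*n) * descP (2*n+1) 2 (2*n+1) := by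
  have h := main_pow (k := 2*n+1) (by omega) (2*n) (by omega) (by omega)
  rw [show 2*n+1-1 = 2*n from by omega, show 2*n+1+1-2*n = 2 from by omega] at h
  rw [h, descInv_eq]
  rw [← mul_assoc]
  congr 1
  group
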